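/- arXiv:2011.02668 — 4 statements merged into one kernel-verified Lean document; each statement's English description precedes it below -/
import Mathlib

section
/- Let n ≥ 5 be an odd integer and let j, k be integers with 1 ≤ j < k ≤ (n−1)/2. Then the ratio sin(jπ/n)/sin(kπ/n) is irrational. -/
/-!
Suppose `r = sin (jπ/n) / sin (kπ/n)` is rational. Then `e^{iπ/n}` is a root of the rational
polynomial `X^(k+2j) - X^k - r (X^(j+2k) - X^j)`, hence so is every primitive `2n`-th root of
unity; as `n` is odd this gives `|sin (tjπ/n)| = r |sin (tkπ/n)| < |sin (tkπ/n)|` for every `t`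
prime to `n`. When `t` runs over the units mod `n`, `tj` runs over all residues with the same gcd
`g` with `n`, so `|sin (tjπ/n)|` attains both its least value `sin (gπ/n)` and its largest value
`sin (((n - g)/2)π/n)`. Comparing least values forces `gcd j n < gcd k n`, comparing largest
values forces `gcd k n < gcd j n`.
-/

open Real Polynomial

theorem aeval_pow_eq_zero_of_coprime {K : Type*} [Field K] [CharZero K] {N : ℕ} (hN : 0 < N)
    {ζ : K} (hζ : IsPrimitiveRoot ζ N) {f : ℚ[X]} (hf : aeval ζ f = 0) {t : ℕ}
    (ht : t.Coprime N) : aeval (ζ ^ t) f = 0 := by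
  rw [← minpoly.dvd_iff, ← cyclotomic_eq_minpoly_rat (hζ.pow_of_coprime t ht) hN,
    cyclotomic_eq_minpoly_rat hζ hN, minpoly.dvd_iff]
  exact hf

theorem exp_mul_I_pow_add_two_mul_sub (θ : ℝ) (m j : ℕ) :
    Complex.exp (θ * Complex.I) ^ (m + 2 * j) - Complex.exp (θ * Complex.I) ^ m
      = 2 * Complex.I * sin (j * θ) * Complex.exp (θ * Complex.I) ^ (m + j) := by
  set w := Complex.exp (θ * Complex.I)
  have hw : w ^ j ≠ 0 := pow_ne_zero _ (Complex.exp_ne_zero _)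
  have hpos : Complex.exp ((j * θ : ℝ) * Complex.I) = w ^ j := by
    rw [← Complex.exp_nat_mul]; push_cast; ring_nf
  have hneg : Complex.exp (-((j * θ : ℝ) * Complex.I)) = (w ^ j)⁻¹ := by
    rw [Complex.exp_neg, hpos]
  rw [Complex.ofReal_sin, Complex.sin, neg_mul, hneg, hpos]
  field_simp
  ring_nf
  rw [Complex.I_sq]
  ring

noncomputable def sinRelationPoly (j k : ℕ) (r : ℚ) : ℚ[X] :=
  X ^ (k + 2 * j) - X ^ k - C r * (X ^ (j + 2 * k) - X ^ j)

theorem aeval_exp_mul_I_sinRelationPoly (θ : ℝ) (j k : ℕ) (r : ℚ) :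
    aeval (Complex.exp (θ * Complex.I)) (sinRelationPoly j k r)
      = 2 * Complex.I * Complex.exp (θ * Complex.I) ^ (j + k)
        * (sin (j * θ) - r * sin (k * θ) : ℝ) := by
  simp only [sinRelationPoly, map_sub, map_mul, map_pow, aeval_X, aeval_C, eq_ratCast,
    exp_mul_I_pow_add_two_mul_sub, add_comm k j]
  push_cast
  ring

theorem sin_mul_eq_of_coprime {n j k : ℕ} (hn : 0 < n) {r : ℚ}
    (h : sin (j * π / n) = r * sin (k * π / n)) {t : ℕ} (ht : t.Coprime (2 * n)) :
    sin ((t * j : ℕ) * π / n) = r * sin ((t * k : ℕ) * π / n) := by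
  have hangle : ∀ (s m : ℕ), (m : ℝ) * (s * π / n) = (s * m : ℕ) * π / n := by
    intro s m; push_cast; ring
  have hζ : IsPrimitiveRoot (Complex.exp ((π / n : ℝ) * Complex.I)) (2 * n) := by
    convert Complex.isPrimitiveRoot_exp (2 * n) (by omega) using 2
    push_cast
    field_simp
  have hpow : Complex.exp ((π / n : ℝ) * Complex.I) ^ t
      = Complex.exp ((t * π / n : ℝ) * Complex.I) := by
    rw [← Complex.exp_nat_mul]; push_cast; ring_nf
  have h1 : aeval (Complex.exp ((π / n : ℝ) * Complex.I)) (sinRelationPoly j k r) = 0 := by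
    rw [aeval_exp_mul_I_sinRelationPoly, ← mul_div_assoc, ← mul_div_assoc, h, sub_self,
      Complex.ofReal_zero, mul_zero]
  have hroot := aeval_pow_eq_zero_of_coprime (by omega) hζ h1 ht
  rw [hpow, aeval_exp_mul_I_sinRelationPoly, mul_eq_zero, Complex.ofReal_eq_zero, sub_eq_zero,
    hangle, hangle] at hroot
  refine hroot.resolve_left (mul_ne_zero (mul_ne_zero two_ne_zero Complex.I_ne_zero) ?_)
  exact pow_ne_zero _ (Complex.exp_ne_zero _)

theorem abs_sin_mul_pi_div_mod (n m : ℕ) :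
    |sin (m * π / n)| = |sin ((m % n : ℕ) * π / n)| := by
  rcases Nat.eq_zero_or_pos n with rfl | hn
  · simp
  have hsplit : (m : ℝ) * π / n = (m % n : ℕ) * π / n + (m / n : ℕ) * π := by
    conv_lhs => rw [← Nat.mod_add_div m n]
    push_cast
    field_simp
  rw [hsplit, sin_add_nat_mul_pi, abs_mul, abs_pow, abs_neg, abs_one, one_pow, one_mul]

theorem abs_sin_mul_pi_div_congr {n a b : ℕ} (h : a ≡ b [MOD n]) :
    |sin (a * π / n)| = |sin (b * π / n)| := by
  rw [abs_sin_mul_pi_div_mod n a, abs_sin_mul_pi_div_mod n b, h]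

theorem abs_sin_mul_eq_of_coprime {n j k : ℕ} (hn : Odd n) {r : ℚ}
    (h : sin (j * π / n) = r * sin (k * π / n)) {t : ℕ} (ht : t.Coprime n) :
    |sin ((t * j : ℕ) * π / n)| = |(r : ℝ)| * |sin ((t * k : ℕ) * π / n)| := by
  obtain ⟨s, hs, hst⟩ : ∃ s : ℕ, s.Coprime (2 * n) ∧ s ≡ t [MOD n] := by
    rcases t.even_or_odd with ht2 | ht2
    · refine ⟨t + n, Nat.Coprime.mul_right ?_ (Nat.coprime_add_self_left.mpr ht), ?_⟩
      · exact (ht2.add_odd hn).coprime_two_right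
      · exact Nat.add_modEq_right
    · exact ⟨t, Nat.Coprime.mul_right ht2.coprime_two_right ht, rfl⟩
  rw [← abs_sin_mul_pi_div_congr (hst.mul_right j), ← abs_sin_mul_pi_div_congr (hst.mul_right k),
    sin_mul_eq_of_coprime hn.pos h hs, abs_mul]

theorem sin_mul_pi_div_nonneg {n m : ℕ} (h : m ≤ n) : 0 ≤ sin (m * π / n) := by
  rcases Nat.eq_zero_or_pos n with rfl | hn
  · simp
  apply sin_nonneg_of_nonneg_of_le_pi (by positivity)
  rw [div_le_iff₀ (by positivity), mul_comm]
  gcongr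

theorem strictMonoOn_sin_mul_pi_div {n : ℕ} (hn : 0 < n) :
    StrictMonoOn (fun m : ℕ => sin (m * π / n)) (Set.Iic (n / 2)) := by
  have hbound : ∀ m ∈ Set.Iic (n / 2), (m : ℝ) * π / n ∈ Set.Icc (-(π / 2)) (π / 2) := by
    intro m hm
    replace hm : 2 * m ≤ n := by rw [Set.mem_Iic] at hm; omega
    refine ⟨by linarith [pi_pos, show 0 ≤ (m : ℝ) * π / n by positivity], ?_⟩
    have hm' : (2 * m : ℝ) ≤ n := by exact_mod_cast hm
    rw [div_le_div_iff₀ (by positivity) two_pos]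
    nlinarith [pi_pos]
  intro a ha b hb hab
  exact strictMonoOn_sin (hbound a ha) (hbound b hb) (by gcongr)

theorem exists_abs_sin_eq_sin {n : ℕ} (hn : 0 < n) (m : ℕ) :
    ∃ e, e ≤ n / 2 ∧ e.gcd n = m.gcd n ∧ |sin (m * π / n)| = sin (e * π / n) := by
  have hd : m % n < n := Nat.mod_lt m hn
  have hgcd : (m % n).gcd n = m.gcd n := (Nat.mod_modEq m n).gcd_eq
  rw [abs_sin_mul_pi_div_mod, abs_of_nonneg (sin_mul_pi_div_nonneg hd.le)]
  by_cases hhalf : 2 * (m % n) ≤ n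
  · exact ⟨m % n, by omega, hgcd, rfl⟩
  · refine ⟨n - m % n, by omega, by rw [Nat.gcd_self_sub_left hd.le, hgcd], ?_⟩
    rw [Nat.cast_sub hd.le, sub_mul, sub_div, mul_div_cancel_left₀ _ (by positivity), sin_pi_sub]

theorem sin_gcd_mul_pi_div_le_abs_sin {n m : ℕ} (hm : ¬ n ∣ m) :
    sin (m.gcd n * π / n) ≤ |sin (m * π / n)| := by
  rcases Nat.eq_zero_or_pos n with rfl | hn
  · simp
  obtain ⟨e, he, hgcd, hsin⟩ := exists_abs_sin_eq_sin hn m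
  have he0 : e ≠ 0 := by
    rintro rfl
    exact hm (by simpa [← hgcd] using Nat.gcd_dvd_left m n)
  rw [hsin, ← hgcd]
  have hle : e.gcd n ≤ e := Nat.gcd_le_left n (Nat.pos_of_ne_zero he0)
  exact (strictMonoOn_sin_mul_pi_div hn).monotoneOn (hle.trans he) he hle

theorem abs_sin_le_sin_half_mul_pi_div {n : ℕ} (hn : Odd n) (m : ℕ) :
    |sin (m * π / n)| ≤ sin (((n - m.gcd n) / 2 : ℕ) * π / n) := by
  obtain ⟨e, he, hgcd, hsin⟩ := exists_abs_sin_eq_sin hn.pos m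
  have hdvd : e.gcd n ∣ n - 2 * e :=
    Nat.dvd_sub (Nat.gcd_dvd_right e n) (dvd_mul_of_dvd_right (Nat.gcd_dvd_left e n) 2)
  have hsub : e.gcd n ≤ n - 2 * e := Nat.le_of_dvd (by obtain ⟨w, rfl⟩ := hn; omega) hdvd
  rw [hsin, ← hgcd]
  exact (strictMonoOn_sin_mul_pi_div hn.pos).monotoneOn he (Set.mem_Iic.2 (by omega))
    (by omega)

theorem abs_sin_mul_pi_div_pos {n m : ℕ} (hn : 0 < n) (hm : ¬ n ∣ m) :
    0 < |sin (m * π / n)| := by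
  have hd : 0 < m % n := Nat.pos_of_ne_zero (fun h => hm (Nat.dvd_of_mod_eq_zero h))
  rw [abs_sin_mul_pi_div_mod]
  refine abs_pos.mpr (sin_pos_of_pos_of_lt_pi (by positivity) ?_).ne'
  rw [div_lt_iff₀ (by positivity), mul_comm]
  gcongr
  exact_mod_cast Nat.mod_lt m hn

theorem exists_coprime_modEq_of_dvd {n d x : ℕ} (hn : n ≠ 0) (hd : d ∣ n) (hx : x.Coprime d) :
    ∃ t, t.Coprime n ∧ t ≡ x [MOD d] := by
  have : NeZero n := ⟨hn⟩
  obtain ⟨u, hu⟩ := ZMod.unitsMap_surjective hd (ZMod.unitOfCoprime x hx)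
  refine ⟨(u : ZMod n).val, ZMod.val_coe_unit_coprime u, (ZMod.natCast_eq_natCast_iff _ _ _).mp ?_⟩
  simpa [ZMod.unitsMap_def, ZMod.coe_unitOfCoprime, ZMod.natCast_val] using congrArg Units.val hu

theorem exists_coprime_mul_modEq_gcd_mul {n : ℕ} (hn : n ≠ 0) (m : ℕ) {b : ℕ}
    (hb : b.Coprime (n / m.gcd n)) : ∃ t, t.Coprime n ∧ t * m ≡ m.gcd n * b [MOD n] := by
  set g := m.gcd n
  have hg : 0 < g := Nat.gcd_pos_of_pos_right m (Nat.pos_of_ne_zero hn)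
  have hn' : n / g ≠ 0 := (Nat.div_pos (Nat.gcd_le_right _ (Nat.pos_of_ne_zero hn)) hg).ne'
  have : NeZero (n / g) := ⟨hn'⟩
  have hm : (m / g).Coprime (n / g) := Nat.coprime_div_gcd_div_gcd hg
  set c : (ZMod (n / g))ˣ := ZMod.unitOfCoprime b hb * (ZMod.unitOfCoprime _ hm)⁻¹
  obtain ⟨t, ht, htc⟩ :=
    exists_coprime_modEq_of_dvd hn (Nat.div_dvd_of_dvd (Nat.gcd_dvd_right m n))
      (ZMod.val_coe_unit_coprime c)
  refine ⟨t, ht, ?_⟩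
  have hmod : t * (m / g) ≡ b [MOD n / g] := by
    rw [← ZMod.natCast_eq_natCast_iff] at htc ⊢
    rw [Nat.cast_mul, htc, ZMod.natCast_val, ZMod.cast_id, ← ZMod.coe_unitOfCoprime _ hm,
      Units.val_mul, mul_assoc, Units.inv_mul, mul_one, ZMod.coe_unitOfCoprime]
  have hscaled := hmod.mul_left' g
  rwa [mul_left_comm g t, Nat.mul_div_cancel' (Nat.gcd_dvd_left m n),
    Nat.mul_div_cancel' (Nat.gcd_dvd_right m n)] at hscaled

theorem exists_coprime_mul_modEq_half {n : ℕ} (hn : Odd n) (m : ℕ) :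
    ∃ t, t.Coprime n ∧ t * m ≡ (n - m.gcd n) / 2 [MOD n] := by
  obtain ⟨w, hw⟩ := hn.of_dvd_nat (Nat.div_dvd_of_dvd (Nat.gcd_dvd_right m n))
  have hb : w.Coprime (n / m.gcd n) := by
    rw [hw, Nat.coprime_mul_right_add_right]
    exact Nat.coprime_one_right w
  have hhalf : m.gcd n * w = (n - m.gcd n) / 2 := by
    have hgw : m.gcd n * (2 * w + 1) = n := hw ▸ Nat.mul_div_cancel' (Nat.gcd_dvd_right m n)
    have hn' : n = 2 * (m.gcd n * w) + m.gcd n := by linarith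
    omega
  rw [← hhalf]
  exact exists_coprime_mul_modEq_gcd_mul hn.pos.ne' m hb

theorem gcd_lt_gcd_of_forall_abs_sin_lt {n a b : ℕ} (hn : 0 < n) (ha : ¬ n ∣ a)
    (h : ∀ t, t.Coprime n → |sin ((t * a : ℕ) * π / n)| < |sin ((t * b : ℕ) * π / n)|) :
    a.gcd n < b.gcd n := by
  have hga : 2 * a.gcd n ≤ n := by
    have hne : a.gcd n ≠ n := fun hg => ha (hg ▸ Nat.gcd_dvd_left a n)
    obtain ⟨c, hc⟩ := Nat.gcd_dvd_right a n
    rcases c with _ | _ | c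
    · omega
    · omega
    · nlinarith
  obtain ⟨t, ht, htb⟩ := exists_coprime_mul_modEq_gcd_mul hn.ne' b (Nat.coprime_one_left _)
  have hta : ¬ n ∣ t * a := fun hdvd => ha (ht.symm.dvd_of_dvd_mul_left hdvd)
  by_contra! hle
  have hsin : sin (a.gcd n * π / n) < sin (b.gcd n * π / n) :=
    calc sin (a.gcd n * π / n) = sin ((t * a).gcd n * π / n) := by rw [ht.gcd_mul_left_cancel]
      _ ≤ |sin ((t * a : ℕ) * π / n)| := sin_gcd_mul_pi_div_le_abs_sin hta
      _ < |sin ((t * b : ℕ) * π / n)| := h t ht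
      _ = sin (b.gcd n * π / n) := by
        rw [abs_sin_mul_pi_div_congr htb, mul_one,
          abs_of_nonneg (sin_mul_pi_div_nonneg (Nat.gcd_le_right b hn))]
  exact hsin.not_ge <| (strictMonoOn_sin_mul_pi_div hn).monotoneOn
    (Set.mem_Iic.2 (by omega)) (Set.mem_Iic.2 (by omega)) hle

theorem gcd_lt_gcd_of_forall_abs_sin_lt_of_odd {n a b : ℕ} (hn : Odd n)
    (h : ∀ t, t.Coprime n → |sin ((t * a : ℕ) * π / n)| < |sin ((t * b : ℕ) * π / n)|) :
    b.gcd n < a.gcd n := by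
  obtain ⟨t, ht, hta⟩ := exists_coprime_mul_modEq_half hn a
  suffices (n - a.gcd n) / 2 < (n - b.gcd n) / 2 by omega
  refine ((strictMonoOn_sin_mul_pi_div hn.pos).lt_iff_lt
    (Set.mem_Iic.2 (by omega)) (Set.mem_Iic.2 (by omega))).mp ?_
  calc sin (((n - a.gcd n) / 2 : ℕ) * π / n) = |sin ((t * a : ℕ) * π / n)| := by
        rw [abs_sin_mul_pi_div_congr hta, abs_of_nonneg (sin_mul_pi_div_nonneg (by omega))]
    _ < |sin ((t * b : ℕ) * π / n)| := h t ht
    _ ≤ sin (((n - b.gcd n) / 2 : ℕ) * π / n) := by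
      rw [← ht.gcd_mul_left_cancel b]
      exact abs_sin_le_sin_half_mul_pi_div hn _

theorem sine_ratio_irrational_odd_general (n : ℕ) (hodd : Odd n)
    (j k : ℕ) (hj : 1 ≤ j) (hjk : j < k) (hk : k ≤ (n - 1) / 2) :
    Irrational (Real.sin (j * Real.pi / n) / Real.sin (k * Real.pi / n)) := by
  rintro ⟨r, hr⟩
  have hn : 0 < n := hodd.pos
  have hmono := strictMonoOn_sin_mul_pi_div hn
  have hsin_j : 0 < sin (j * π / n) := by
    simpa using hmono (a := 0) (Set.mem_Iic.2 (by omega)) (Set.mem_Iic.2 (by omega)) hj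
  have hsin_jk : sin (j * π / n) < sin (k * π / n) :=
    hmono (Set.mem_Iic.2 (by omega)) (Set.mem_Iic.2 (by omega)) hjk
  have hrel : sin (j * π / n) = r * sin (k * π / n) := by
    rw [hr, div_mul_cancel₀ _ (by linarith)]
  have hr1 : |(r : ℝ)| < 1 := by
    rw [hr, abs_div, abs_of_pos hsin_j, abs_of_pos (by linarith), div_lt_one (by linarith)]
    exact hsin_jk
  have hlt : ∀ t, t.Coprime n → |sin ((t * j : ℕ) * π / n)| < |sin ((t * k : ℕ) * π / n)| := by
    intro t ht
    rw [abs_sin_mul_eq_of_coprime hodd hrel ht]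
    refine mul_lt_of_lt_one_left (abs_sin_mul_pi_div_pos hn fun hdvd => ?_) hr1
    exact Nat.not_dvd_of_pos_of_lt (by omega) (by omega) (ht.symm.dvd_of_dvd_mul_left hdvd)
  exact lt_asymm (gcd_lt_gcd_of_forall_abs_sin_lt hn (Nat.not_dvd_of_pos_of_lt hj (by omega)) hlt)
    (gcd_lt_gcd_of_forall_abs_sin_lt_of_odd hodd hlt)

/-- For odd `n ≥ 5` and integers `1 ≤ j < k ≤ (n-1)/2`, the ratio
`sin(jπ/n)/sin(kπ/n)` is irrational. -/
theorem sine_ratio_irrational_odd (n : ℕ) (hn : 5 ≤ n) (hodd : Odd n)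
    (j k : ℕ) (hj : 1 ≤ j) (hjk : j < k) (hk : k ≤ (n - 1) / 2) :
    Irrational (Real.sin (j * Real.pi / n) / Real.sin (k * Real.pi / n)) :=
  sine_ratio_irrational_odd_general n hodd j k hj hjk hk
end

section
/- Let n ≥ 8 be an even integer and let j, k be integers with 0 ≤ j < k and 2k+2 ≤ n/2. Then sin((2j+2)π/n)/sin((2k+2)π/n) is rational if and only if n = 12j+12 and k = 3j+2. -/
/-!
Put `p = j + 1`, `q = k + 1` and `θ = 2π/n`. With `ζ = exp (iθ)` we have
`ζ^{2p} - 1 = 2i sin (pθ) ζ^p`, so a relation `sin (pθ) = s sin (qθ)` with `s ∈ ℚ` is a polynomial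
identity over `ℚ` satisfied by `ζ`. It therefore holds for every primitive `n`-th root of unity
`μ`, where it reads `|1 - μ^{2p}| = |s| |1 - μ^{2q}|`. Taking the product over all `μ`, each side
becomes a power of `Φ_m(1)` with `m = n / gcd(n, 2p)`, resp. `m = n / gcd(n, 2q)`, and `Φ_m(1)` is
`1` or a prime when `m ≠ 1`. Since `0 < s < 1`, the denominator of `s` is not `1`, and comparing
denominators forces `φ(n / gcd(n, 2q)) = 1` and `den s = 2`. Hence `n = 4q`, `sin (qθ) = 1` and
`sin (pθ) = 1/2`, i.e. `q = 3p`.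
-/

open Finset Polynomial Real

theorem MonoidHom.prod_comp_of_surjective {G H M : Type*} [Group G] [Fintype G] [Group H]
    [Fintype H] [CommMonoid M] (φ : G →* H) (hφ : Function.Surjective φ) (f : H → M) :
    ∏ g, f (φ g) = (∏ h, f h) ^ (Fintype.card G / Fintype.card H) := by
  classical
  have hfiber (h : H) : #{g | φ g = h} = #{g | φ g = 1} :=
    MonoidHom.card_fiber_eq_of_mem_range φ (hφ h) ⟨1, map_one φ⟩
  have hcard : Fintype.card G = Fintype.card H * #{g | φ g = 1} := by
    rw [← card_univ, card_eq_sum_card_fiberwise (t := univ) (f := φ) fun _ _ ↦ mem_univ _,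
      sum_congr rfl fun h _ ↦ hfiber h, sum_const, card_univ, smul_eq_mul]
  rw [hcard, Nat.mul_div_cancel_left _ Fintype.card_pos, ← prod_pow,
    ← prod_fiberwise_of_maps_to (t := univ) (g := φ) fun _ _ ↦ mem_univ _]
  refine prod_congr rfl fun h _ ↦ ?_
  rw [prod_congr rfl fun g hg ↦ by rw [(mem_filter.1 hg).2], prod_const, hfiber]

theorem IsPrimitiveRoot.pow_div_gcd {M : Type*} [CommMonoid M] {ζ : M} {n : ℕ} [NeZero n]
    (hζ : IsPrimitiveRoot ζ n) (c : ℕ) : IsPrimitiveRoot (ζ ^ c) (n / n.gcd c) := by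
  rcases eq_or_ne c 0 with rfl | hc
  · simp [Nat.div_self (NeZero.pos n)]
  · rw [hζ.eq_orderOf, ← orderOf_pow' ζ hc]
    exact IsPrimitiveRoot.orderOf _

namespace IsPrimitiveRoot

variable {R : Type*} [CommRing R] [IsDomain R] {ζ : R} {n : ℕ}

theorem prod_units_zmod_pow {M : Type*} [CommMonoid M] [NeZero n] (hζ : IsPrimitiveRoot ζ n)
    (f : R → M) : ∏ t : (ZMod n)ˣ, f (ζ ^ (t : ZMod n).val) = ∏ μ ∈ primitiveRoots n R, f μ := by
  have hmem {μ : R} : μ ∈ primitiveRoots n R ↔ IsPrimitiveRoot μ n :=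
    mem_primitiveRoots (NeZero.pos n)
  refine prod_bij (fun t _ ↦ ζ ^ (t : ZMod n).val) (fun t _ ↦ ?_) (fun t _ u _ htu ↦ ?_)
    (fun μ hμ ↦ ?_) fun _ _ ↦ rfl
  · exact hmem.2 (hζ.pow_of_coprime _ (ZMod.val_coe_unit_coprime t))
  · exact Units.ext (ZMod.val_injective n (hζ.pow_inj (ZMod.val_lt _) (ZMod.val_lt _) htu))
  · obtain ⟨i, hi, rfl⟩ := hζ.eq_pow_of_pow_eq_one (hmem.1 hμ).pow_eq_one
    have hcop := (hζ.pow_iff_coprime (NeZero.pos n) i).1 (hmem.1 hμ)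
    exact ⟨ZMod.unitOfCoprime i hcop, mem_univ _, by
      rw [ZMod.coe_unitOfCoprime, ZMod.val_natCast_of_lt hi]⟩

theorem prod_units_zmod_pow_of_dvd {M : Type*} [CommMonoid M] {m : ℕ} [NeZero n] [NeZero m]
    (hζ : IsPrimitiveRoot ζ m) (hmn : m ∣ n) (f : R → M) :
    ∏ t : (ZMod n)ˣ, f (ζ ^ (t : ZMod n).val) =
      (∏ μ ∈ primitiveRoots m R, f μ) ^ (n.totient / m.totient) := by
  have hpow (t : (ZMod n)ˣ) :
      ζ ^ (t : ZMod n).val = ζ ^ (ZMod.unitsMap hmn t : ZMod m).val := by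
    rw [← pow_mod_orderOf, ← pow_mod_orderOf ζ (ZMod.unitsMap hmn t : ZMod m).val,
      ← hζ.eq_orderOf]
    refine congrArg _ ((ZMod.natCast_eq_natCast_iff ..).1 ?_)
    rw [ZMod.natCast_val, ZMod.natCast_zmod_val]
    rfl
  simp_rw [hpow]
  rw [MonoidHom.prod_comp_of_surjective _ (ZMod.unitsMap_surjective hmn)
    (fun u : (ZMod m)ˣ ↦ f (ζ ^ (u : ZMod m).val)), hζ.prod_units_zmod_pow,
    ZMod.card_units_eq_totient, ZMod.card_units_eq_totient]

theorem prod_primitiveRoots_one_sub (hζ : IsPrimitiveRoot ζ n) :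
    ∏ μ ∈ primitiveRoots n R, (1 - μ) = (cyclotomic n R).eval 1 := by
  rw [cyclotomic_eq_prod_X_sub_primitiveRoots hζ, eval_prod]
  simp

theorem prod_primitiveRoots_one_sub_pow [NeZero n] (hζ : IsPrimitiveRoot ζ n) (c : ℕ) :
    ∏ μ ∈ primitiveRoots n R, (1 - μ ^ c) =
      (cyclotomic (n / n.gcd c) R).eval 1 ^ (n.totient / (n / n.gcd c).totient) := by
  have : NeZero (n / n.gcd c) := ⟨(Nat.div_pos (Nat.gcd_le_left c (NeZero.pos n))
    (Nat.gcd_pos_of_pos_left c (NeZero.pos n))).ne'⟩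
  rw [← hζ.prod_units_zmod_pow]
  simp_rw [← pow_mul, mul_comm _ c, pow_mul]
  rw [(hζ.pow_div_gcd c).prod_units_zmod_pow_of_dvd (Nat.div_dvd_of_dvd (Nat.gcd_dvd_left n c)),
    (hζ.pow_div_gcd c).prod_primitiveRoots_one_sub]

theorem aeval_eq_zero_of_isPrimitiveRoot {K : Type*} [Field K] [CharZero K] {ζ μ : K} [NeZero n]
    (hζ : IsPrimitiveRoot ζ n) (hμ : IsPrimitiveRoot μ n) {g : ℚ[X]} (hg : aeval ζ g = 0) :
    aeval μ g = 0 := by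
  obtain ⟨h, rfl⟩ := cyclotomic_eq_minpoly_rat hζ (NeZero.pos n) ▸ minpoly.dvd ℚ ζ hg
  rw [map_mul, aeval_def, ← eval_map, map_cyclotomic, (isRoot_cyclotomic_iff.2 hμ).eq_zero,
    zero_mul]

end IsPrimitiveRoot

theorem Polynomial.natAbs_eval_one_cyclotomic_eq_one_or_prime {m : ℕ} (hm : m ≠ 1) :
    ((cyclotomic m ℤ).eval 1).natAbs = 1 ∨ ((cyclotomic m ℤ).eval 1).natAbs.Prime := by
  by_cases hpow : IsPrimePow m
  · obtain ⟨ℓ, e, hℓ, he, rfl⟩ := (isPrimePow_nat_iff m).1 hpow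
    have : Fact ℓ.Prime := ⟨hℓ⟩
    obtain ⟨e, rfl⟩ := Nat.exists_eq_add_one_of_ne_zero he.ne'
    right
    rw [eval_one_cyclotomic_prime_pow]
    simpa using hℓ
  · left
    rw [eval_one_cyclotomic_not_prime_pow]
    · rfl
    rintro ℓ hℓ (_ | e) rfl
    · exact hm rfl
    · exact hpow ((isPrimePow_nat_iff _).2 ⟨ℓ, e + 1, hℓ, e.succ_pos, rfl⟩)

theorem Rat.den_pow_dvd_of_natCast_eq {s : ℚ} {a b N : ℕ} (h : (a : ℚ) = s ^ N * b) :
    s.den ^ N ∣ b := by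
  rcases eq_or_ne b 0 with rfl | hb
  · exact dvd_zero _
  have hs : s ^ N = Rat.divInt a b := by
    rw [Rat.divInt_eq_div]
    push_cast
    rw [h, mul_div_cancel_right₀ _ (Nat.cast_ne_zero.2 hb)]
  rw [← Rat.den_pow, ← Int.natCast_dvd_natCast, hs]
  exact Rat.den_dvd a b

theorem Rat.den_ne_one_of_pos_of_lt_one {s : ℚ} (h0 : 0 < s) (h1 : s < 1) : s.den ≠ 1 := by
  intro h
  rw [← (Rat.den_eq_one_iff s).1 h] at h0 h1
  norm_cast at h0 h1
  omega

theorem Rat.eq_half_of_den_eq_two {s : ℚ} (h0 : 0 < s) (h1 : s < 1) (h : s.den = 2) :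
    s = 1 / 2 := by
  have hnum : (s.num : ℚ) = s * 2 := by rw [← Rat.mul_den_eq_num, h]; rfl
  have : s.num = 1 := by
    have h0' : (0 : ℚ) < s.num := by linarith
    have h1' : (s.num : ℚ) < 2 := by linarith
    norm_cast at h0' h1'
    omega
  rw [this, Int.cast_one] at hnum
  linarith

theorem Nat.eq_one_and_eq_of_pow_dvd_pow {d b N K m : ℕ} (hd : d ≠ 1) (hb : b = 1 ∨ b.Prime)
    (hN : N ≠ 0) (hK : K * m = N) (h : d ^ N ∣ b ^ K) : m = 1 ∧ d = b := by
  rcases hb with rfl | hb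
  · rw [one_pow, Nat.dvd_one, pow_eq_one_iff_left hN] at h
    exact absurd h hd
  obtain ⟨c, -, rfl⟩ := (Nat.dvd_prime_pow hb).1 (dvd_trans (dvd_pow_self _ hN) h)
  have hc : c ≠ 0 := by rintro rfl; exact hd (pow_zero b)
  have hK0 : K ≠ 0 := by rintro rfl; exact hN (by rw [← hK, zero_mul])
  have hm : m ≠ 0 := by rintro rfl; exact hN (by rw [← hK, mul_zero])
  rw [← pow_mul, Nat.pow_dvd_pow_iff_le_right hb.one_lt, ← hK] at h
  have hcm : c * m ≤ 1 :=
    Nat.le_of_mul_le_mul_right (by linarith [h]) (Nat.pos_of_ne_zero hK0)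
  obtain ⟨rfl, rfl⟩ := mul_eq_one.1 (le_antisymm hcm (Nat.mul_pos (by omega) (by omega)))
  exact ⟨rfl, pow_one b⟩

theorem Complex.exp_mul_I_pow_two_mul_sub_one (θ : ℝ) (p : ℕ) :
    exp (θ * I) ^ (2 * p) - 1 = 2 * I * Real.sin (p * θ) * exp (θ * I) ^ p := by
  rw [pow_mul', ← exp_nat_mul, ofReal_sin, sin, neg_mul, ← mul_assoc, exp_neg]
  push_cast
  have := exp_ne_zero (p * θ * I)
  field_simp
  linear_combination (exp (p * θ * I) ^ 2 - 1) * I_sq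

theorem Complex.prod_norm_one_sub_pow {n : ℕ} [NeZero n] (c : ℕ) :
    ∏ μ ∈ primitiveRoots n ℂ, ‖1 - μ ^ c‖ =
      (((cyclotomic (n / n.gcd c) ℤ).eval 1).natAbs ^ (n.totient / (n / n.gcd c).totient) : ℕ) := by
  rw [← norm_prod, (isPrimitiveRoot_exp n (NeZero.ne n)).prod_primitiveRoots_one_sub_pow,
    ← map_cyclotomic_int, eval_map, eval₂_at_one, eq_intCast, norm_pow, norm_intCast]
  push_cast [Nat.cast_natAbs, Int.cast_abs]
  rfl

theorem norm_one_sub_pow_eq_of_sin_eq {n p q : ℕ} [NeZero n] {s : ℚ}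
    (h : sin (p * (2 * π / n)) = s * sin (q * (2 * π / n))) {μ : ℂ}
    (hμ : IsPrimitiveRoot μ n) : ‖1 - μ ^ (2 * p)‖ = |(s : ℝ)| * ‖1 - μ ^ (2 * q)‖ := by
  -- `g(ζ) = 2i ζ^(p+q) (sin (2πp/n) - s sin (2πq/n))` for `ζ = exp (2πi/n)`
  set g : ℚ[X] := X ^ q * (X ^ (2 * p) - 1) - C s * X ^ p * (X ^ (2 * q) - 1)
  have haeval (x : ℂ) :
      aeval x g = x ^ q * (x ^ (2 * p) - 1) - s * x ^ p * (x ^ (2 * q) - 1) := by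
    simp [g]
  have hζ : IsPrimitiveRoot (Complex.exp (↑(2 * π / n) * Complex.I)) n := by
    convert Complex.isPrimitiveRoot_exp n (NeZero.ne n) using 2
    push_cast
    ring
  have hg : aeval (Complex.exp (↑(2 * π / n) * Complex.I)) g = 0 := by
    rw [haeval, Complex.exp_mul_I_pow_two_mul_sub_one, Complex.exp_mul_I_pow_two_mul_sub_one, h]
    push_cast
    ring
  have hμg := sub_eq_zero.1 (haeval μ ▸ hζ.aeval_eq_zero_of_isPrimitiveRoot hμ hg)
  simpa [hμ.norm'_eq_one (NeZero.ne n), norm_sub_rev] using congrArg norm hμg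

theorem den_eq_two_of_sin_eq {n p q : ℕ} [NeZero n] (hq : ¬n ∣ 2 * q) {s : ℚ} (hs : s.den ≠ 1)
    (h : sin (p * (2 * π / n)) = s * sin (q * (2 * π / n))) :
    s.den = 2 ∧ n ∣ 4 * q := by
  set m := n / n.gcd (2 * q) with hm
  have hmn : m ∣ n := Nat.div_dvd_of_dvd (Nat.gcd_dvd_left n (2 * q))
  have hm1 : m ≠ 1 := fun h1 ↦ hq <| by
    rw [← Nat.div_mul_cancel (Nat.gcd_dvd_left n (2 * q)), ← hm, h1, one_mul]
    exact Nat.gcd_dvd_right n (2 * q)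
  have hrel : ((((cyclotomic (n / n.gcd (2 * p)) ℤ).eval 1).natAbs ^
      (n.totient / (n / n.gcd (2 * p)).totient) : ℕ) : ℚ) =
      |s| ^ n.totient * ((((cyclotomic m ℤ).eval 1).natAbs ^ (n.totient / m.totient) : ℕ) : ℚ) := by
    have hμ (μ : ℂ) (hμ : μ ∈ primitiveRoots n ℂ) :=
      norm_one_sub_pow_eq_of_sin_eq h ((mem_primitiveRoots (NeZero.pos n)).1 hμ)
    rw [← Rat.cast_inj (α := ℝ)]
    push_cast only [Rat.cast_mul, Rat.cast_pow, Rat.cast_abs, Rat.cast_natCast]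
    rw [← Complex.prod_norm_one_sub_pow, ← Complex.prod_norm_one_sub_pow, prod_congr rfl hμ,
      prod_mul_distrib, prod_const, Complex.card_primitiveRoots]
  obtain ⟨hφm, hden⟩ := Nat.eq_one_and_eq_of_pow_dvd_pow (Rat.den_abs_eq_den s ▸ hs)
    (natAbs_eval_one_cyclotomic_eq_one_or_prime hm1) (Nat.totient_pos.2 (NeZero.pos n)).ne'
    (Nat.div_mul_cancel (Nat.totient_dvd_of_dvd hmn)) (Rat.den_pow_dvd_of_natCast_eq hrel)
  have hm2 : m = 2 := (Nat.totient_eq_one_iff.1 hφm).resolve_left hm1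
  refine ⟨by rw [← Rat.den_abs_eq_den, hden, hm2, cyclotomic_two]; simp, ?_⟩
  rw [← Nat.div_mul_cancel (Nat.gcd_dvd_left n (2 * q)), ← hm, hm2,
    show 4 * q = 2 * (2 * q) by ring]
  exact Nat.mul_dvd_mul_left 2 (Nat.gcd_dvd_right n (2 * q))

theorem Real.sin_div_sin_mem_Ioo {x y : ℝ} (hx : 0 < x) (hxy : x < y) (hy : y ≤ π / 2) :
    sin x / sin y ∈ Set.Ioo 0 1 := by
  have hsinx : 0 < sin x := sin_pos_of_pos_of_lt_pi hx (by linarith [pi_pos])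
  have hsinxy : sin x < sin y :=
    strictMonoOn_sin ⟨by linarith [pi_pos], by linarith⟩ ⟨by linarith [pi_pos], hy⟩ hxy
  exact ⟨div_pos hsinx (hsinx.trans hsinxy), (div_lt_one (hsinx.trans hsinxy)).2 hsinxy⟩

theorem sin_mul_div_sin_mul_mem_Ioo {n p q : ℕ} (hp : 0 < p) (hpq : p < q) (hqn : 4 * q ≤ n) :
    sin (p * (2 * π / n)) / sin (q * (2 * π / n)) ∈ Set.Ioo 0 1 := by
  have hn0 : (0 : ℝ) < n := Nat.cast_pos.2 (by omega)
  refine sin_div_sin_mem_Ioo (by positivity) (by gcongr) ?_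
  rw [mul_div_assoc', div_le_div_iff₀ hn0 two_pos]
  have : (4 * q : ℝ) ≤ n := by exact_mod_cast hqn
  nlinarith [pi_pos]

theorem eq_three_mul_of_sin_eq_half_mul_sin {p q : ℕ} (hpq : p < q)
    (h : sin (p * (2 * π / (4 * q : ℕ))) = ((1 / 2 : ℚ) : ℝ) * sin (q * (2 * π / (4 * q : ℕ)))) :
    q = 3 * p := by
  have hq : (0 : ℝ) < q := Nat.cast_pos.2 (by omega)
  have hpq' : (p : ℝ) < q := by exact_mod_cast hpq
  have hβ : (q : ℝ) * (2 * π / (4 * q : ℕ)) = π / 2 := by push_cast; field_simp; ring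
  have hα : (p : ℝ) * (2 * π / (4 * q : ℕ)) = π / 6 := by
    refine injOn_sin ⟨?_, ?_⟩ ⟨by linarith [pi_pos], by linarith [pi_pos]⟩ ?_
    · have : 0 ≤ (p : ℝ) * (2 * π / (4 * q : ℕ)) := by positivity
      linarith [pi_pos]
    · rw [← hβ]
      gcongr
    · rw [h, hβ, sin_pi_div_two, sin_pi_div_six]
      norm_num
  push_cast at hα
  field_simp at hα
  exact_mod_cast (by nlinarith [pi_pos] : (q : ℝ) = 3 * p)

theorem sine_ratio_rational_iff_even_second_general (n : ℕ) (j k : ℕ) (hjk : j < k) (hk : 2 * k + 2 ≤ n / 2) :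
    (Real.sin ((2 * j + 2) * Real.pi / n) / Real.sin ((2 * k + 2) * Real.pi / n)) ∈
        Set.range ((↑) : ℚ → ℝ) ↔
      (n = 12 * j + 12 ∧ k = 3 * j + 2) := by
  have : NeZero n := ⟨by omega⟩
  have h4k : 4 * (k + 1) ≤ n := by omega
  have hangle (i : ℕ) : (2 * i + 2) * π / n = ((i + 1 : ℕ) : ℝ) * (2 * π / n) := by
    push_cast; ring
  rw [hangle j, hangle k]
  constructor
  · rintro ⟨s, hs⟩
    obtain ⟨hs0, hs1⟩ := hs ▸ sin_mul_div_sin_mul_mem_Ioo (by omega) (by omega) h4k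
    have hrel :
        sin (((j + 1 : ℕ) : ℝ) * (2 * π / n)) = s * sin (((k + 1 : ℕ) : ℝ) * (2 * π / n)) := by
      rw [hs, div_mul_cancel₀ _ (div_ne_zero_iff.1 (hs ▸ hs0.ne')).2]
    replace hs0 : 0 < s := mod_cast hs0
    replace hs1 : s < 1 := mod_cast hs1
    obtain ⟨hden, hdvd⟩ := den_eq_two_of_sin_eq (Nat.not_dvd_of_pos_of_lt (by omega) (by omega))
      (Rat.den_ne_one_of_pos_of_lt_one hs0 hs1) hrel
    have hn4 : n = 4 * (k + 1) := le_antisymm (Nat.le_of_dvd (by omega) hdvd) h4k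
    rw [Rat.eq_half_of_den_eq_two hs0 hs1 hden, hn4] at hrel
    have := eq_three_mul_of_sin_eq_half_mul_sin (by omega) hrel
    omega
  · rintro ⟨rfl, rfl⟩
    refine ⟨1 / 2, ?_⟩
    rw [show ((j + 1 : ℕ) : ℝ) * (2 * π / ↑(12 * j + 12)) = π / 6 by push_cast; field_simp; ring,
      show ((3 * j + 2 + 1 : ℕ) : ℝ) * (2 * π / ↑(12 * j + 12)) = π / 2 by
        push_cast; field_simp; ring, sin_pi_div_six, sin_pi_div_two]
    norm_num

/-- For even `n ≥ 8` and integers `0 ≤ j < k` with `2k+2 ≤ n/2`, the ratio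
`sin((2j+2)π/n)/sin((2k+2)π/n)` is rational if and only if `n = 12j+12` and `k = 3j+2`. -/
theorem sine_ratio_rational_iff_even_second (n : ℕ) (hn : 8 ≤ n) (heven : Even n)
    (j k : ℕ) (hjk : j < k) (hk : 2 * k + 2 ≤ n / 2) :
    (Real.sin ((2 * j + 2) * Real.pi / n) / Real.sin ((2 * k + 2) * Real.pi / n)) ∈
        Set.range ((↑) : ℚ → ℝ) ↔
      (n = 12 * j + 12 ∧ k = 3 * j + 2) :=
  sine_ratio_rational_iff_even_second_general n j k hjk hk
end

section
/- Let k and n be positive integers with gcd(k, n) = 1. Then, inside ℂ, the field ℚ(sin(kπ/n)) generated over ℚ by sin(kπ/n) equals the field ℚ(ζ_{g(n)} + ζ_{g(n)}⁻¹) generated over ℚ by ζ_{g(n)} + ζ_{g(n)}⁻¹, i.e., ℚ(sin(kπ/n)) is the maximal real subfield of the cyclotomic field ℚ(ζ_{g(n)}). -/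
/-- `g(m) = m` if `m ≡ 2 (mod 4)`, `g(m) = 2m` if `4 ∣ m`, and `g(m) = 4m` if `m` is odd. -/
def gAux (m : ℕ) : ℕ :=
  if m % 4 = 2 then m else if m % 4 = 0 then 2 * m else 4 * m

/-- `ζ_m = exp(2πi/m)`. -/
noncomputable def zetaC (m : ℕ) : ℂ := Complex.exp (2 * Real.pi * Complex.I / m)

/-!
Write `sin (kπ/n) = cos (π/2 - kπ/n) = cos (a θ)` with `θ = 2π/g(n)` and `a` an integer coprime to
the half-period `N = π/θ`. Chebyshev polynomials put `cos (b θ)` in `ℚ(cos θ)` for every integer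
`b`, and a Bézout relation `u a + v N = 1` gives `cos (u a θ) = ± cos θ`, so
`ℚ(sin (kπ/n)) = ℚ(cos θ) = ℚ(ζ + ζ⁻¹)` since `ζ + ζ⁻¹ = 2 cos θ`.
-/

open IntermediateField Real

theorem IntermediateField.adjoin_simple_algebraMap_mul {F E : Type*} [Field F] [Field E]
    [Algebra F E] {c : F} (hc : c ≠ 0) (x : E) : F⟮algebraMap F E c * x⟯ = F⟮x⟯ := by
  have hc' : algebraMap F E c ≠ 0 := (map_ne_zero _).2 hc
  refine le_antisymm (adjoin_simple_le_iff.2 ?_) (adjoin_simple_le_iff.2 ?_)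
  · exact mul_mem (algebraMap_mem _ c) (mem_adjoin_simple_self F x)
  · have h := mul_mem (inv_mem (algebraMap_mem F⟮algebraMap F E c * x⟯ c))
      (mem_adjoin_simple_self F (algebraMap F E c * x))
    rwa [inv_mul_cancel_left₀ hc'] at h

theorem IntermediateField.adjoin_simple_two_mul {F E : Type*} [Field F] [CharZero F] [Field E]
    [Algebra F E] (x : E) : F⟮2 * x⟯ = F⟮x⟯ := by
  simpa only [map_ofNat] using adjoin_simple_algebraMap_mul (two_ne_zero : (2 : F) ≠ 0) x

theorem cos_int_mul_mem_adjoin_cos (x : ℝ) (b : ℤ) :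
    ((cos (b * x) : ℝ) : ℂ) ∈ ℚ⟮((cos x : ℝ) : ℂ)⟯ := by
  have hT : ((cos (b * x) : ℝ) : ℂ) =
      Polynomial.aeval ((cos x : ℝ) : ℂ) (Polynomial.Chebyshev.T ℚ b) := by
    rw [Polynomial.Chebyshev.aeval_T, Complex.ofReal_cos x, Polynomial.Chebyshev.T_complex_cos]
    push_cast
    rfl
  rw [hT]
  exact algebra_adjoin_le_adjoin ℚ _ (Polynomial.aeval_mem_adjoin_singleton ℚ _)

theorem adjoin_cos_int_mul_eq {θ : ℝ} {a N : ℤ} (hθ : N * θ = π) (ha : IsCoprime a N) :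
    ℚ⟮((cos (a * θ) : ℝ) : ℂ)⟯ = ℚ⟮((cos θ : ℝ) : ℂ)⟯ := by
  refine le_antisymm (adjoin_simple_le_iff.2 (cos_int_mul_mem_adjoin_cos θ a))
    (adjoin_simple_le_iff.2 ?_)
  obtain ⟨u, v, huv⟩ := ha
  have hθ' : θ = u * (a * θ) + v * π := by
    rw [← hθ]
    linear_combination (-θ) * (by exact_mod_cast huv : (u : ℝ) * a + v * N = 1)
  have hcos : ((cos θ : ℝ) : ℂ) = (-1) ^ v * ((cos (u * (a * θ)) : ℝ) : ℂ) := by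
    conv_lhs => rw [hθ', cos_add_int_mul_pi]
    push_cast
    rfl
  rw [hcos]
  exact mul_mem (zpow_mem (neg_mem (one_mem _)) v) (cos_int_mul_mem_adjoin_cos _ u)

theorem zetaC_add_inv (N : ℕ) : zetaC N + (zetaC N)⁻¹ = 2 * ((cos (2 * π / N) : ℝ) : ℂ) := by
  rw [zetaC, ← Complex.exp_neg, Complex.ofReal_cos, Complex.cos, mul_div_assoc]
  push_cast
  ring_nf

theorem exists_sin_eq_cos_of_odd {k n : ℕ} (hn : Odd n) (hcop : k.Coprime n) :
    ∃ a N : ℤ, IsCoprime a N ∧ N * (2 * π / (4 * n)) = π ∧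
      sin (k * π / n) = cos (a * (2 * π / (4 * n))) := by
  have hn0 : (n : ℝ) ≠ 0 := by exact_mod_cast hn.pos.ne'
  have h2n : IsCoprime (2 : ℤ) n := Int.isCoprime_two_left.2 (by exact_mod_cast hn)
  have hkn : IsCoprime (k : ℤ) n := Nat.isCoprime_iff_coprime.2 hcop
  have ha : IsCoprime ((n : ℤ) - 2 * k) n := by
    rw [show (n : ℤ) - 2 * k = n * 1 - 2 * k by ring, IsCoprime.mul_sub_left_left_iff]
    exact h2n.mul_left hkn
  have ha2 : IsCoprime ((n : ℤ) - 2 * k) 2 :=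
    Int.isCoprime_two_right.2 ((by exact_mod_cast hn : Odd (n : ℤ)).sub_even (even_two_mul _))
  refine ⟨n - 2 * k, 2 * n, ha2.mul_right ha, by push_cast; field_simp; ring, ?_⟩
  rw [← cos_pi_div_two_sub]
  congr 1
  push_cast
  field_simp
  ring

theorem exists_sin_eq_cos_of_four_dvd {k n : ℕ} (hn : 0 < n) (h4 : 4 ∣ n) (hcop : k.Coprime n) :
    ∃ a N : ℤ, IsCoprime a N ∧ N * (2 * π / (2 * n)) = π ∧
      sin (k * π / n) = cos (a * (2 * π / (2 * n))) := by
  have hk : Odd k :=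
    Nat.coprime_two_right.1 (hcop.coprime_dvd_right ((by norm_num : 2 ∣ 4).trans h4))
  obtain ⟨j, rfl⟩ := h4
  obtain ⟨i, rfl⟩ := hk
  have hj0 : (j : ℝ) ≠ 0 := by exact_mod_cast (by omega : j ≠ 0)
  have hkj : IsCoprime ((2 * i + 1 : ℕ) : ℤ) j :=
    Nat.isCoprime_iff_coprime.2 (Nat.Coprime.coprime_mul_left_right hcop)
  have haj : IsCoprime (2 * (j : ℤ) - (2 * i + 1)) j := by
    rw [show 2 * (j : ℤ) = j * 2 by ring, IsCoprime.mul_sub_left_left_iff]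
    exact_mod_cast hkj
  have ha2 : IsCoprime (2 * (j : ℤ) - (2 * i + 1)) 2 :=
    Int.isCoprime_two_right.2 ⟨j - i - 1, by ring⟩
  refine ⟨2 * j - (2 * i + 1), 4 * j, ?_, by push_cast; field_simp, ?_⟩
  · rw [show (4 : ℤ) * j = 2 ^ 2 * j by norm_num]
    exact ha2.pow_right.mul_right haj
  rw [← cos_pi_div_two_sub]
  congr 1
  push_cast
  field_simp
  ring

theorem exists_sin_eq_cos_of_mod_four_eq_two {k n : ℕ} (h2 : n % 4 = 2) (hcop : k.Coprime n) :
    ∃ a N : ℤ, IsCoprime a N ∧ N * (2 * π / n) = π ∧ sin (k * π / n) = cos (a * (2 * π / n)) := by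
  have hk : Odd k := Nat.coprime_two_right.1 (hcop.coprime_dvd_right (by omega))
  obtain ⟨j, rfl⟩ : ∃ j, n = 4 * j + 2 := ⟨n / 4, by omega⟩
  obtain ⟨i, rfl⟩ := hk
  have hkm : IsCoprime ((2 * i + 1 : ℕ) : ℤ) ((2 * j + 1 : ℕ) : ℤ) :=
    Nat.isCoprime_iff_coprime.2 (Nat.Coprime.coprime_mul_left_right
      (by rwa [show 4 * j + 2 = 2 * (2 * j + 1) by ring] at hcop))
  have ha : IsCoprime (2 * ((j : ℤ) - i)) (2 * j + 1) := by
    rw [show 2 * ((j : ℤ) - i) = (2 * j + 1) * 1 - (2 * i + 1) by ring,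
      IsCoprime.mul_sub_left_left_iff]
    exact_mod_cast hkm
  refine ⟨j - i, 2 * j + 1, ha.of_mul_left_right, by push_cast; field_simp; ring, ?_⟩
  rw [← cos_pi_div_two_sub]
  congr 1
  push_cast
  field_simp
  ring

theorem exists_sin_eq_cos_two_pi_div_gAux {k n : ℕ} (hn : 0 < n) (hcop : k.Coprime n) :
    ∃ a N : ℤ, IsCoprime a N ∧ N * (2 * π / gAux n) = π ∧
      sin (k * π / n) = cos (a * (2 * π / gAux n)) := by
  unfold gAux
  split_ifs with h2 h0
  · exact exists_sin_eq_cos_of_mod_four_eq_two h2 hcop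
  · exact_mod_cast exists_sin_eq_cos_of_four_dvd hn (Nat.dvd_of_mod_eq_zero h0) hcop
  · exact_mod_cast exists_sin_eq_cos_of_odd (Nat.odd_iff.2 (by omega)) hcop

theorem adjoin_sin_eq_maximal_real_subfield_general (k n : ℕ) (hn : 0 < n)
    (hcop : Nat.gcd k n = 1) :
    IntermediateField.adjoin ℚ {((Real.sin (k * Real.pi / n) : ℝ) : ℂ)} =
      IntermediateField.adjoin ℚ {zetaC (gAux n) + (zetaC (gAux n))⁻¹} := by
  obtain ⟨a, N, ha, hN, hsin⟩ := exists_sin_eq_cos_two_pi_div_gAux hn hcop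
  rw [zetaC_add_inv, adjoin_simple_two_mul, hsin, adjoin_cos_int_mul_eq hN ha]

/-- For coprime positive integers `k` and `n`, the field `ℚ(sin(kπ/n)) ⊆ ℂ` equals
`ℚ(ζ_{g(n)} + ζ_{g(n)}⁻¹)`, the maximal real subfield of `ℚ(ζ_{g(n)})`. -/
theorem adjoin_sin_eq_maximal_real_subfield (k n : ℕ) (hk : 0 < k) (hn : 0 < n)
    (hcop : Nat.gcd k n = 1) :
    IntermediateField.adjoin ℚ {((Real.sin (k * Real.pi / n) : ℝ) : ℂ)} =
      IntermediateField.adjoin ℚ {zetaC (gAux n) + (zetaC (gAux n))⁻¹} :=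
  adjoin_sin_eq_maximal_real_subfield_general k n hn hcop
end

section
/- Let k and n be coprime positive integers with n ≥ 3. Then the degree over ℚ of the field ℚ(sin(kπ/n)) generated by the real algebraic number sin(kπ/n) equals φ(g(n))/2, where φ is Euler's totient function. -/
open IntermediateField Polynomial

theorem IsPrimitiveRoot.ne_ofReal {ξ : ℂ} {m : ℕ} (hξ : IsPrimitiveRoot ξ m) (hm : 3 ≤ m)
    (r : ℝ) : ξ ≠ r := by
  rintro rfl
  have hr : IsPrimitiveRoot r m :=
    (IsPrimitiveRoot.map_iff_of_injective (f := Complex.ofRealHom) Complex.ofReal_injective).1 hξ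
  have hsq : r ^ 2 = 1 := by
    rcases (pow_eq_one_iff_of_ne_zero (by omega)).1 hr.pow_eq_one with h | ⟨h, -⟩ <;> simp [h]
  have := Nat.le_of_dvd two_pos (hr.dvd_of_pow_eq_one 2 hsq)
  omega

theorem IntermediateField.finrank_adjoin_eq_two_of_add_inv_eq {F E : Type*} [Field F] [Field E]
    [Algebra F E] {ξ : E} (hξ : ξ ≠ 0) {s : F} (hs : ξ + ξ⁻¹ = algebraMap F E s)
    (hξF : ξ ∉ (algebraMap F E).range) : Module.finrank F F⟮ξ⟯ = 2 := by
  have hmonic : (X ^ 2 - C s * X + 1 : F[X]).Monic := by monicity!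
  have hdeg : (X ^ 2 - C s * X + 1 : F[X]).natDegree = 2 := by compute_degree!
  have hroot : aeval ξ (X ^ 2 - C s * X + 1 : F[X]) = 0 := by
    simp only [map_add, map_sub, map_mul, aeval_C, aeval_X_pow, aeval_X, map_one, ← hs]
    field_simp
    ring
  have hint : IsIntegral F ξ := ⟨_, hmonic, by rwa [← aeval_def]⟩
  have hle : (minpoly F ξ).natDegree ≤ 2 :=
    hdeg ▸ natDegree_le_natDegree (minpoly.min F ξ hmonic hroot)
  have hne : (minpoly F ξ).natDegree ≠ 1 := mt minpoly.natDegree_eq_one_iff.1 hξF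
  have hpos := minpoly.natDegree_pos hint
  rw [adjoin.finrank hint]
  omega

theorem IsPrimitiveRoot.finrank_adjoin_rat {ξ : ℂ} {m : ℕ} (hm : 0 < m)
    (hξ : IsPrimitiveRoot ξ m) :
    Module.finrank ℚ ℚ⟮ξ⟯ = m.totient := by
  rw [adjoin.finrank (hξ.isIntegral hm).tower_top, ← cyclotomic_eq_minpoly_rat hξ hm,
    natDegree_cyclotomic]

theorem two_mul_finrank_adjoin_of_isPrimitiveRoot {ξ : ℂ} {m : ℕ} (hξ : IsPrimitiveRoot ξ m)
    (hm : 3 ≤ m) {x : ℝ} (hx : ξ + ξ⁻¹ = 2 * x) :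
    2 * Module.finrank ℚ ℚ⟮x⟯ = m.totient := by
  let f : ℝ →ₐ[ℚ] ℂ := IsScalarTower.toAlgHom ℚ ℝ ℂ
  have hF : ℚ⟮x⟯.map f = ℚ⟮(x : ℂ)⟯ := by rw [adjoin_map, Set.image_singleton]; rfl
  have hFE : ℚ⟮(x : ℂ)⟯ ≤ ℚ⟮ξ⟯ := by
    rw [adjoin_simple_le_iff, show (x : ℂ) = (ξ + ξ⁻¹) / 2 by rw [hx]; ring]
    have hξ' : ξ ∈ ℚ⟮ξ⟯ := mem_adjoin_simple_self ℚ ξ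
    exact div_mem (add_mem hξ' (inv_mem hξ')) (ofNat_mem _ 2)
  have hquad : Module.finrank ℚ⟮(x : ℂ)⟯ ℚ⟮(x : ℂ)⟯⟮ξ⟯ = 2 := by
    refine finrank_adjoin_eq_two_of_add_inv_eq (hξ.ne_zero (by omega))
      (s := ⟨2 * x, mul_mem (ofNat_mem _ 2) (mem_adjoin_simple_self ℚ _)⟩) hx ?_
    rintro ⟨⟨y, hy⟩, rfl⟩
    obtain ⟨r, -, rfl⟩ : y ∈ ℚ⟮x⟯.map f := hF ▸ hy
    exact hξ.ne_ofReal hm r rfl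
  rw [(equivMap ℚ⟮x⟯ f).toLinearEquiv.finrank_eq, hF, ← hξ.finrank_adjoin_rat (by omega),
    ← finrank_bot_mul_relfinrank hFE, relfinrank_eq_finrank_of_le hFE, extendScalars_adjoin hFE,
    hquad, mul_comm]

open Real in
theorem two_mul_finrank_adjoin_cos_two_pi_mul_rat (q : ℚ) (hq : 3 ≤ q.den) :
    2 * Module.finrank ℚ ℚ⟮cos (2 * π * q)⟯ = q.den.totient := by
  refine two_mul_finrank_adjoin_of_isPrimitiveRoot (Complex.isPrimitiveRoot_exp_rat q) hq ?_
  rw [← Complex.exp_neg, Complex.ofReal_cos, Complex.two_cos]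
  push_cast
  ring_nf

theorem Rat.den_natCast_div_natCast_of_coprime {a b : ℕ} (hb : 0 < b) (h : a.Coprime b) :
    ((a : ℚ) / b).den = b := by
  have := Rat.den_div_eq_of_coprime (a := a) (b := b) (by omega) (by simpa using h)
  rw [Int.cast_natCast, Int.cast_natCast] at this
  exact_mod_cast this

theorem Rat.natCast_div_natCast_eq_of_mul_eq {a b c d : ℕ} (hb : b ≠ 0) (hd : d ≠ 0)
    (h : a * d = c * b) : (a : ℚ) / b = c / d := by
  rw [div_eq_div_iff (by positivity) (by positivity)]
  exact_mod_cast h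

theorem totient_den_eq_totient_gAux {k n : ℕ} (hn : 0 < n) (hcop : k.Coprime n) :
    (((3 * n + 2 * k : ℕ) : ℚ) / (4 * n : ℕ)).den.totient = (gAux n).totient := by
  have hk_of_even (h : 2 ∣ n) : Odd k := Nat.coprime_two_right.1 (hcop.coprime_dvd_right h)
  rcases (by omega : n % 4 = 0 ∨ n % 4 = 2 ∨ n % 2 = 1) with h | h | h
  · obtain ⟨t, rfl⟩ : ∃ t, n = 4 * t := ⟨n / 4, by omega⟩
    have hk := hk_of_even ⟨2 * t, by ring⟩
    have hcop' : (k + t * 6).Coprime (2 ^ 3 * t) := by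
      refine Nat.Coprime.mul_right (Nat.Coprime.pow_right 3 ?_) ?_
      · exact Nat.coprime_two_right.2 (by grind)
      · exact (Nat.coprime_add_mul_left_left _ _ _).2 (hcop.coprime_dvd_right ⟨4, by ring⟩)
    rw [Rat.natCast_div_natCast_eq_of_mul_eq (d := 2 ^ 3 * t) (c := k + t * 6) (by omega) (by omega)
      (by ring), Rat.den_natCast_div_natCast_of_coprime (by omega) hcop', gAux, if_neg (by omega),
      if_pos (by omega)]
    ring_nf
  · obtain ⟨t, rfl⟩ : ∃ t, n = 2 * t := ⟨n / 2, by omega⟩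
    have hk := hk_of_even ⟨t, rfl⟩
    have ht : Odd t := by grind
    obtain ⟨s, hs⟩ : ∃ s, k + t * 3 = 2 * s := ⟨(k + t * 3) / 2, by grind⟩
    have hst : s.Coprime t := by
      have := (Nat.coprime_add_mul_left_left k t 3).2 (hcop.coprime_dvd_right ⟨2, by ring⟩)
      exact (hs ▸ this).coprime_mul_left
    rw [Rat.natCast_div_natCast_eq_of_mul_eq (d := 2 * t) (c := s) (by omega) (by omega) (by grind),
      gAux, if_pos h]
    rcases Nat.even_or_odd s with ⟨u, rfl⟩ | hs'
    · rw [Rat.natCast_div_natCast_eq_of_mul_eq (d := t) (c := u) (by omega) (by omega) (by ring),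
        Rat.den_natCast_div_natCast_of_coprime (by omega) (hst.coprime_dvd_left ⟨2, by ring⟩),
        Nat.totient_two_mul_of_odd ht]
    · rw [Rat.den_natCast_div_natCast_of_coprime (by omega)
        (Nat.Coprime.mul_right (Nat.coprime_two_right.2 hs') hst)]
  · obtain ⟨t, rfl⟩ : ∃ t, n = 2 * t + 1 := ⟨n / 2, by omega⟩
    have hcop' : (2 * k + (2 * t + 1) * 3).Coprime (2 ^ 2 * (2 * t + 1)) := by
      refine Nat.Coprime.mul_right (Nat.Coprime.pow_right 2 ?_) ?_
      · exact Nat.coprime_two_right.2 (by grind)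
      · exact (Nat.coprime_add_mul_left_left _ _ _).2
          (Nat.Coprime.mul_left (Nat.coprime_two_left.2 (by grind)) hcop)
    rw [Rat.natCast_div_natCast_eq_of_mul_eq (d := 2 ^ 2 * (2 * t + 1))
      (c := 2 * k + (2 * t + 1) * 3) (by omega) (by omega) (by ring),
      Rat.den_natCast_div_natCast_of_coprime (by omega) hcop', gAux, if_neg (by omega),
      if_neg (by omega)]
    ring_nf

theorem Nat.three_le_of_two_le_totient {m : ℕ} (h : 2 ≤ m.totient) : 3 ≤ m := by
  by_contra! hm
  interval_cases m <;> simp at h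

theorem finrank_adjoin_sin_general (k n : ℕ) (hn : 3 ≤ n)
    (hcop : Nat.gcd k n = 1) :
    Module.finrank ℚ
        (IntermediateField.adjoin ℚ {Real.sin (k * Real.pi / n)} : IntermediateField ℚ ℝ) =
      Nat.totient (gAux n) / 2 := by
  set q : ℚ := ((3 * n + 2 * k : ℕ) : ℚ) / (4 * n : ℕ)
  have hsin : Real.sin (k * Real.pi / n) = Real.cos (2 * Real.pi * q) := by
    rw [← Real.cos_sub_pi_div_two, ← Real.cos_add_two_pi]
    congr 1
    simp only [q]
    push_cast
    field_simp
    ring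
  have htot : q.den.totient = (gAux n).totient := totient_den_eq_totient_gAux (by omega) hcop
  have hg : 3 ≤ gAux n := by unfold gAux; split_ifs <;> omega
  have hq : 3 ≤ q.den := by
    refine Nat.three_le_of_two_le_totient (htot ▸ ?_)
    obtain ⟨r, hr⟩ := Nat.totient_even hg
    have := Nat.totient_pos.2 (show 0 < gAux n by omega)
    omega
  have := two_mul_finrank_adjoin_cos_two_pi_mul_rat q hq
  rw [hsin]
  omega

/-- For coprime positive integers `k` and `n` with `n ≥ 3`, the degree of
`ℚ(sin(kπ/n))` over `ℚ` is `φ(g(n))/2`. -/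
theorem finrank_adjoin_sin (k n : ℕ) (hk : 0 < k) (hn : 3 ≤ n)
    (hcop : Nat.gcd k n = 1) :
    Module.finrank ℚ
        (IntermediateField.adjoin ℚ {Real.sin (k * Real.pi / n)} : IntermediateField ℚ ℝ) =
      Nat.totient (gAux n) / 2 :=
  finrank_adjoin_sin_general k n hn hcop
end
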